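/- arXiv:1508.02662 — 3 statements merged into one kernel-verified Lean document; each statement's English description precedes it below -/
import Mathlib

section
/- If G is an infinite abelian group and A ⊆ G satisfies ⋃_{i=1}^h iA ∼ G, then ⋃_{i=2}^{h+1} iA = G. -/
open Pointwise

/-- `itSum A n` is the `n`-fold sumset of `A` (sums of exactly `n` elements of `A`). -/
def itSum {G : Type*} [AddCommGroup G] (A : Set G) : ℕ → Set G
  | 0 => {0}
  | n + 1 => itSum A n + A

/-- `SimEq A B` means the symmetric difference of `A` and `B` is finite. -/
def SimEq {G : Type*} [AddCommGroup G] (A B : Set G) : Prop :=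
  (symmDiff A B).Finite

lemma itSum_finite {G : Type*} [AddCommGroup G] {A : Set G} (hA : A.Finite) (n : ℕ) :
    (itSum A n).Finite := by
  induction n with
  | zero => exact Set.finite_singleton 0
  | succ n ih => exact ih.add hA

theorem stmt_1 {G : Type*} [AddCommGroup G] [Infinite G] (A : Set G) (h : ℕ)
    (hh : 1 ≤ h) (hA : SimEq (⋃ i ∈ Finset.Icc 1 h, itSum A i) Set.univ) :
    (⋃ i ∈ Finset.Icc 2 (h + 1), itSum A i) = Set.univ := by
  set U : Set G := ⋃ i ∈ Finset.Icc 1 h, itSum A i with hU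
  have hUc : Uᶜ.Finite := by
    apply hA.subset
    intro x hx
    simp [symmDiff_def]
    exact hx
  have hAinf : A.Infinite := by
    intro hAfin
    have hUfin : U.Finite := by
      apply Set.Finite.biUnion (Finset.Icc 1 h).finite_toSet
      intro i _
      exact itSum_finite hAfin i
    have : (Set.univ : Set G).Finite := by
      have := hUfin.union hUc
      simpa [Set.union_compl_self] using this
    exact Set.infinite_univ this
  ext x
  simp only [Set.mem_univ, iff_true]
  -- the set {x - a | a ∈ A} is infinite, hence meets U
  have hinj : Set.InjOn (fun a => x - a) A := fun a _ b _ hab => by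
    have : x - a = x - b := hab
    exact sub_right_injective this
  have himg : ((fun a => x - a) '' A).Infinite := hAinf.image hinj
  obtain ⟨y, hyA, hyU⟩ : ∃ y ∈ (fun a => x - a) '' A, y ∈ U := by
    by_contra hcon
    push_neg at hcon
    exact himg (hUc.subset (fun y hy => hcon y hy))
  obtain ⟨a, haA, rfl⟩ := hyA
  rw [hU] at hyU
  simp only [Set.mem_iUnion, Finset.mem_Icc] at hyU
  obtain ⟨i, ⟨hi1, hih⟩, hyi⟩ := hyU
  simp only [Set.mem_iUnion, Finset.mem_Icc]
  refine ⟨i + 1, ⟨by omega, by omega⟩, ?_⟩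
  show x ∈ itSum A i + A
  exact ⟨x - a, hyi, a, haA, by simp⟩
end

section
/- Let G = 𝔽_p[t] (the additive group of polynomials over a prime field 𝔽_p) and h ≥ 2. Then the maximum number of exceptional elements in a basis of order at most h of G equals ⌊(h−1)/(p−1)⌋. -/
open Pointwise

/-!
Upper bound. After a translation we may assume `0 ∈ A`. The `𝔽_p`-span of a set containing `0` is
the union of its iterated sumsets, so an exceptional `e` does not lie in the span of `A \ {e}`.
For a finite set `E` of exceptional elements this yields a linear map `φ : G → 𝔽_p^E` sending
`e ∈ E` to the unit vector at `e` and `A \ E` to `0`. Weigh `x` by the sum of the representatives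
in `[0, p)` of the coordinates of `φ x`: a sum of `h` elements of `A` weighs at most `h`, and
exactly `h` only if all summands lie in `E`. The fibre of `φ` over `(-1, …, -1)` is infinite and
weighs `|E|(p-1)`, so if `|E|(p-1) ≥ h` it meets the cofinite set `hA` only inside the finite
set `hE`.

Lower bound. For `s = ⌊(h-1)/(p-1)⌋` take `A = X^s 𝔽_p[X] ∪ {1, X, …, X^(s-1)}`. A polynomial is
its part of degree `< s`, a sum of at most `s(p-1)` of the `X^i`, plus an element of the ideal;
so `A` is a basis of order `h`, and removing an element of the infinite ideal leaves a basis of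
order `s(p-1)+2`. Removing `X^i` leaves a set inside the subgroup of polynomials with vanishing
`i`-th coefficient, which has infinite complement.
-/

section Sumsets

variable {G : Type*} [AddCommGroup G] {A B : Set G} {m n k : ℕ} {x y : G}

lemma mem_itSum_one : x ∈ itSum A 1 ↔ x ∈ A := by
  simp [itSum]

lemma itSum_add (A : Set G) (m : ℕ) : ∀ n, itSum A (m + n) = itSum A m + itSum A n
  | 0 => by simp [itSum]
  | n + 1 => by rw [← add_assoc, itSum, itSum, itSum_add A m n, add_assoc]

lemma add_mem_itSum (hx : x ∈ itSum A m) (hy : y ∈ itSum A n) : x + y ∈ itSum A (m + n) := by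
  rw [itSum_add]
  exact Set.add_mem_add hx hy

lemma nsmul_mem_itSum (hx : x ∈ itSum A m) : ∀ n : ℕ, n • x ∈ itSum A (n * m)
  | 0 => by simp [itSum]
  | n + 1 => by
    rw [succ_nsmul, add_mul, one_mul]
    exact add_mem_itSum (nsmul_mem_itSum hx n) hx

lemma sum_mem_itSum {ι : Type*} (s : Finset ι) {f : ι → G} {c : ι → ℕ}
    (hf : ∀ i ∈ s, f i ∈ itSum A (c i)) : ∑ i ∈ s, f i ∈ itSum A (∑ i ∈ s, c i) := by
  classical
  induction s using Finset.induction_on with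
  | empty => simp [itSum]
  | insert i s hi ih =>
    rw [Finset.sum_insert hi, Finset.sum_insert hi]
    exact add_mem_itSum (hf i (s.mem_insert_self i)) (ih fun j hj ↦ hf j (s.mem_insert_of_mem hj))

lemma itSum_mono_of_zero_mem (h0 : 0 ∈ A) (hmn : m ≤ n) : itSum A m ⊆ itSum A n := by
  intro x hx
  obtain ⟨k, rfl⟩ := Nat.exists_eq_add_of_le hmn
  simpa using add_mem_itSum hx (nsmul_mem_itSum (mem_itSum_one.mpr h0) k)

lemma itSum_mono (hAB : A ⊆ B) : ∀ k, itSum A k ⊆ itSum B k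
  | 0 => subset_rfl
  | k + 1 => Set.add_subset_add (itSum_mono hAB k) hAB

lemma itSum_subset_itSum_mul (hAB : A ⊆ itSum B m) : ∀ n, itSum A n ⊆ itSum B (n * m)
  | 0 => by simp [itSum]
  | n + 1 => by
    rintro _ ⟨x, hx, a, ha, rfl⟩
    rw [add_mul, one_mul]
    exact add_mem_itSum (itSum_subset_itSum_mul hAB n hx) (hAB ha)

lemma itSum_subset_addSubgroup {H : AddSubgroup G} (hA : A ⊆ H) : ∀ k, itSum A k ⊆ H
  | 0 => by simp [itSum]
  | k + 1 => by
    rintro _ ⟨x, hx, a, ha, rfl⟩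
    exact H.add_mem (itSum_subset_addSubgroup hA k hx) (hA ha)

lemma Set.Finite.itSum (hA : A.Finite) : ∀ k, (itSum A k).Finite
  | 0 => Set.finite_singleton 0
  | k + 1 => (hA.itSum k).add hA

lemma itSum_vadd (v : G) (A : Set G) : ∀ k, itSum (v +ᵥ A) k = (k • v) +ᵥ itSum A k
  | 0 => by simp [itSum]
  | k + 1 => by rw [itSum, itSum, itSum_vadd v A k, vadd_add_vadd, succ_nsmul]

lemma simEq_univ_iff {X : Set G} : SimEq X Set.univ ↔ Xᶜ.Finite := by
  rw [SimEq, ← Set.top_eq_univ, symmDiff_top]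
  rfl

lemma SimEq.univ_mono {X Y : Set G} (hX : SimEq X Set.univ) (hXY : X ⊆ Y) :
    SimEq Y Set.univ := by
  rw [simEq_univ_iff] at *
  exact hX.subset (Set.compl_subset_compl.mpr hXY)

lemma simEq_univ_vadd_iff (v : G) (X : Set G) : SimEq (v +ᵥ X) Set.univ ↔ SimEq X Set.univ := by
  rw [simEq_univ_iff, simEq_univ_iff, ← Set.vadd_set_compl, Set.finite_vadd_set]

lemma Set.Infinite.of_simEq_itSum_univ [Infinite G] (hA : SimEq (itSum A k) Set.univ) :
    A.Infinite := by
  intro hfin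
  apply Set.infinite_univ (α := G)
  simpa using (hfin.itSum k).union (simEq_univ_iff.mp hA)

end Sumsets

section Subgroups

variable {G : Type*} [AddCommGroup G] {A : Set G} {k : ℕ}

lemma AddSubgroup.coe_subset_itSum (H : AddSubgroup G) (hk : 1 ≤ k) : (H : Set G) ⊆ itSum H k :=
  fun _ hx ↦ itSum_mono_of_zero_mem H.zero_mem hk (mem_itSum_one.mpr hx)

lemma AddSubgroup.coe_subset_itSum_diff_singleton (H : AddSubgroup G) (hH : (H : Set G).Infinite)
    (w : G) (hk : 2 ≤ k) : (H : Set G) ⊆ itSum ((H : Set G) \ {w}) k := by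
  induction k, hk using Nat.le_induction with
  | base =>
    intro z hz
    obtain ⟨u, huH, hu⟩ := (hH.sdiff (Set.toFinite {w, z - w})).nonempty
    simp only [Set.mem_insert_iff, Set.mem_singleton_iff, not_or] at hu
    have hzu : z - u ≠ w := fun h ↦ hu.2 (by rw [← h, sub_sub_cancel])
    have hu' : u ∈ (H : Set G) \ {w} := ⟨huH, hu.1⟩
    have hzu' : z - u ∈ (H : Set G) \ {w} := ⟨H.sub_mem hz huH, hzu⟩
    simpa using add_mem_itSum (mem_itSum_one.mpr hu') (mem_itSum_one.mpr hzu')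
  | succ k _ ih =>
    intro z hz
    obtain ⟨u, huH, hu⟩ := (hH.sdiff (Set.toFinite {w})).nonempty
    have hu' : u ∈ (H : Set G) \ {w} := ⟨huH, hu⟩
    simpa using add_mem_itSum (ih (H.sub_mem hz huH)) (mem_itSum_one.mpr hu')

lemma not_simEq_itSum_univ_of_subset_addSubgroup {H : AddSubgroup G}
    (hH : (H : Set G)ᶜ.Infinite) (hA : A ⊆ H) : ¬ SimEq (itSum A k) Set.univ := fun hAk ↦
  hH ((simEq_univ_iff.mp hAk).subset (Set.compl_subset_compl.mpr (itSum_subset_addSubgroup hA k)))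

end Subgroups

section Exceptional

variable {G : Type*} [AddCommGroup G]

def exceptionalSet (A : Set G) : Set G :=
  {a ∈ A | ¬ ∃ k, 1 ≤ k ∧ SimEq (itSum (A \ {a}) k) Set.univ}

lemma exceptionalSet_vadd (v : G) (A : Set G) :
    exceptionalSet (v +ᵥ A) = v +ᵥ exceptionalSet A := by
  ext x
  have hdiff : (v +ᵥ A) \ {x} = v +ᵥ (A \ {-v +ᵥ x}) := by
    rw [Set.vadd_set_sdiff, Set.vadd_set_singleton, vadd_neg_vadd]
  simp only [exceptionalSet, Set.mem_vadd_set_iff_neg_vadd_mem, Set.mem_ofPred_eq, hdiff,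
    itSum_vadd, simEq_univ_vadd_iff]

end Exceptional

section Subadditive

variable {G : Type*} [AddCommGroup G] {A S : Set G} (w : G → ℕ)

lemma subadditive_le_of_mem_itSum (hw0 : w 0 = 0) (hw : ∀ x y, w (x + y) ≤ w x + w y) {r : ℕ}
    (hA : ∀ a ∈ A, w a ≤ r) : ∀ {k x}, x ∈ itSum A k → w x ≤ k * r
  | 0, x, hx => by simp_all [itSum]
  | k + 1, _, ⟨x, hx, a, ha, rfl⟩ => by
    have := subadditive_le_of_mem_itSum hw0 hw hA hx
    have := hw x a
    have := hA a ha
    nlinarith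

lemma mem_itSum_of_le_subadditive (hw0 : w 0 = 0) (hw : ∀ x y, w (x + y) ≤ w x + w y)
    (hS : ∀ s ∈ S, w s ≤ 1) (hA : ∀ a ∈ A \ S, w a = 0) :
    ∀ {k x}, x ∈ itSum A k → k ≤ w x → x ∈ itSum S k
  | 0, _, hx, _ => hx
  | k + 1, _, ⟨y, hy, a, ha, rfl⟩, hk => by
    by_cases haS : a ∈ S
    · have hky : k ≤ w y := by linarith [hw y a, hS a haS]
      exact add_mem_itSum (mem_itSum_of_le_subadditive hw0 hw hS hA hy hky) (mem_itSum_one.mpr haS)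
    · have hA1 : ∀ b ∈ A, w b ≤ 1 := fun b hb ↦ by
        by_cases hbS : b ∈ S
        · exact hS b hbS
        · simp [hA b ⟨hb, hbS⟩]
      have := subadditive_le_of_mem_itSum w hw0 hw hA1 hy
      linarith [hw y a, hA a ⟨ha, haS⟩]

end Subadditive

lemma AddMonoidHom.infinite_preimage_singleton {G M : Type*} [AddGroup G] [Infinite G] [AddGroup M]
    [Finite M] (φ : G →+ M) (x : G) : (φ ⁻¹' {φ x}).Infinite := by
  obtain ⟨y, hy⟩ := Finite.exists_infinite_fiber φ
  rw [Set.infinite_coe_iff] at hy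
  obtain ⟨z, hz⟩ := hy.nonempty
  refine (hy.image (add_right_injective (x - z)).injOn).mono ?_
  rintro _ ⟨u, hu, rfl⟩
  simp_all

section UpperBound

variable {p : ℕ} {G : Type*} [AddCommGroup G] [Module (ZMod p) G] {A : Set G} {h : ℕ}

def valSum {ι : Type*} [Fintype ι] (c : ι → ZMod p) : ℕ := ∑ i, (c i).val

lemma valSum_zero {ι : Type*} [Fintype ι] : valSum (0 : ι → ZMod p) = 0 := by
  simp [valSum]

lemma valSum_add_le {ι : Type*} [Fintype ι] (c d : ι → ZMod p) :
    valSum (c + d) ≤ valSum c + valSum d := by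
  rw [valSum, valSum, valSum, ← Finset.sum_add_distrib]
  exact Finset.sum_le_sum fun i _ ↦ ZMod.val_add_le _ _

lemma valSum_single_one_le {ι : Type*} [Fintype ι] [DecidableEq ι] (i : ι) :
    valSum (Pi.single i (1 : ZMod p)) ≤ 1 := by
  simp [valSum, Pi.single_apply, apply_ite, ZMod.val_one_eq_one_mod, Nat.mod_le]

lemma valSum_neg_one [Fact p.Prime] {ι : Type*} [Fintype ι] :
    valSum (fun _ : ι ↦ (-1 : ZMod p)) = Fintype.card ι * (p - 1) := by
  simp [valSum, ZMod.neg_val, ZMod.val_one]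

lemma zmod_smul_mem_itSum [NeZero p] {B : Set G} {x : G} {m : ℕ} (c : ZMod p)
    (hx : x ∈ itSum B m) : c • x ∈ itSum B (c.val * m) := by
  rw [← ZMod.natCast_zmod_val c, Nat.cast_smul_eq_nsmul, ZMod.val_natCast_of_lt c.val_lt]
  exact nsmul_mem_itSum hx _

lemma exists_mem_itSum_of_mem_span [NeZero p] {B : Set G} {x : G}
    (hx : x ∈ Submodule.span (ZMod p) B) : ∃ m, x ∈ itSum B m := by
  induction hx using Submodule.span_induction with
  | mem x hx => exact ⟨1, mem_itSum_one.mpr hx⟩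
  | zero => exact ⟨0, rfl⟩
  | add x y _ _ hx hy =>
    obtain ⟨m, hm⟩ := hx
    obtain ⟨n, hn⟩ := hy
    exact ⟨m + n, add_mem_itSum hm hn⟩
  | smul c x _ hx =>
    obtain ⟨m, hm⟩ := hx
    exact ⟨c.val * m, zmod_smul_mem_itSum c hm⟩

lemma notMem_span_of_mem_exceptionalSet [NeZero p] {a : G} (hA : SimEq (itSum A h) Set.univ)
    (h0 : (0 : G) ∈ A \ {a}) (ha : a ∈ exceptionalSet A) :
    a ∉ Submodule.span (ZMod p) (A \ {a}) := by
  intro hspan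
  obtain ⟨m, hm⟩ := exists_mem_itSum_of_mem_span hspan
  have hA_sub : A ⊆ itSum (A \ {a}) (m + 1) := by
    intro b hb
    rcases eq_or_ne b a with rfl | hba
    · exact itSum_mono_of_zero_mem h0 m.le_succ hm
    · exact itSum_mono_of_zero_mem h0 (by omega) (mem_itSum_one.mpr ⟨hb, hba⟩)
  refine ha.2 ⟨h * (m + 1) + 1, by omega, hA.univ_mono ?_⟩
  exact (itSum_subset_itSum_mul hA_sub h).trans (itSum_mono_of_zero_mem h0 (by omega))

lemma exists_linearMap_of_subset_exceptionalSet [Fact p.Prime] [DecidableEq G] {E : Finset G}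
    (hA : SimEq (itSum A h) Set.univ) (h0 : (0 : G) ∈ A \ E) (hE : (E : Set G) ⊆ exceptionalSet A) :
    ∃ φ : G →ₗ[ZMod p] (E → ZMod p),
      (∀ e : E, φ e = Pi.single e 1) ∧ ∀ b ∈ A \ E, φ b = 0 := by
  have hdual (e : E) : ∃ f : Module.Dual (ZMod p) G, f e = 1 ∧ ∀ b ∈ A \ {(e : G)}, f b = 0 := by
    have h0e : (0 : G) ∈ A \ {(e : G)} := ⟨h0.1, fun he ↦ h0.2 (by simp_all)⟩
    obtain ⟨f, hf0, hfe⟩ := LinearMap.exists_extend_of_notMem 0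
      (notMem_span_of_mem_exceptionalSet (p := p) hA h0e (hE e.2)) (1 : ZMod p)
    exact ⟨f, hfe, fun b hb ↦ by simpa using LinearMap.congr_fun hf0 ⟨b, Submodule.subset_span hb⟩⟩
  choose f hf1 hf0 using hdual
  refine ⟨LinearMap.pi f, fun e ↦ funext fun e' ↦ ?_, fun b hb ↦ funext fun e' ↦ ?_⟩
  · rcases eq_or_ne e' e with rfl | hne
    · simp [hf1]
    · simpa [hne] using hf0 e' e ⟨(hE e.2).1, Subtype.coe_injective.ne hne.symm⟩
  · exact hf0 e' b ⟨hb.1, fun hbe ↦ hb.2 (by simp_all)⟩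

theorem card_mul_lt_of_subset_exceptionalSet [Fact p.Prime] [Infinite G] {E : Finset G}
    (hA : SimEq (itSum A h) Set.univ) (h0 : (0 : G) ∈ A \ E)
    (hE : (E : Set G) ⊆ exceptionalSet A) : E.card * (p - 1) < h := by
  classical
  obtain ⟨φ, hφE, hφA⟩ := exists_linearMap_of_subset_exceptionalSet (p := p) hA h0 hE
  let w : G → ℕ := fun x ↦ valSum (φ x)
  have hw0 : w 0 = 0 := by simp [w, valSum_zero]
  have hw (x y : G) : w (x + y) ≤ w x + w y := by simp only [w, map_add, valSum_add_le]
  have hwE : ∀ e ∈ E, w e ≤ 1 := fun e he ↦ by simpa [w, hφE ⟨e, he⟩] using valSum_single_one_le _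
  have hwA : ∀ b ∈ A \ E, w b = 0 := fun b hb ↦ by simp [w, hφA b hb, valSum_zero]
  have hφv : φ (-∑ e : E, (e : G)) = fun _ ↦ -1 := by
    ext e
    simp [hφE, Finset.sum_apply, Pi.single_apply]
  by_contra! hle
  apply φ.toAddMonoidHom.infinite_preimage_singleton (-∑ e : E, (e : G))
  refine ((simEq_univ_iff.mp hA).union (E.finite_toSet.itSum h)).subset fun x hx ↦ ?_
  by_cases hxA : x ∈ itSum A h
  · refine Or.inr (mem_itSum_of_le_subadditive w hw0 hw hwE hwA hxA ?_)
    simp only [Set.mem_preimage, Set.mem_singleton_iff, LinearMap.toAddMonoidHom_coe, hφv] at hx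
    simpa [w, hx, valSum_neg_one] using hle
  · exact Or.inl hxA

theorem ncard_exceptionalSet_le [Fact p.Prime] [Infinite G] (hA : SimEq (itSum A h) Set.univ) :
    (exceptionalSet A).ncard ≤ (h - 1) / (p - 1) := by
  obtain hinf | hfin := (exceptionalSet A).infinite_or_finite
  · simp [hinf.ncard]
  obtain ⟨b, hbA, hb⟩ := ((Set.Infinite.of_simEq_itSum_univ hA).sdiff hfin).nonempty
  have hA' : SimEq (itSum (-b +ᵥ A) h) Set.univ := by rwa [itSum_vadd, simEq_univ_vadd_iff]
  have hfin' : (exceptionalSet (-b +ᵥ A)).Finite := by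
    rw [exceptionalSet_vadd]
    exact hfin.vadd_set
  have h0 : (0 : G) ∈ (-b +ᵥ A) \ hfin'.toFinset := by
    simp [exceptionalSet_vadd, Set.mem_vadd_set_iff_neg_vadd_mem, hbA, hb]
  have hlt := card_mul_lt_of_subset_exceptionalSet (p := p) hA' h0 (by simp)
  rw [← Set.ncard_eq_toFinset_card _ hfin', exceptionalSet_vadd, Set.ncard_vadd_set] at hlt
  have := (Fact.out : p.Prime).two_le
  rw [Nat.le_div_iff_mul_le (by omega)]
  omega

end UpperBound

section Construction

open Polynomial

variable {p s : ℕ}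

lemma Polynomial.X_pow_injective (R : Type*) [Semiring R] [Nontrivial R] :
    Function.Injective fun n : ℕ ↦ (X : R[X]) ^ n :=
  fun m n hmn ↦ by simpa using congrArg natDegree hmn

def lowMonomials (R : Type*) [Semiring R] (s : ℕ) : Set R[X] := (X ^ ·) '' Set.Iio s

lemma ncard_lowMonomials (R : Type*) [Semiring R] [Nontrivial R] (s : ℕ) :
    (lowMonomials R s).ncard = s := by
  rw [lowMonomials, Set.ncard_image_of_injective _ (X_pow_injective R), Set.ncard_Iio_nat]

lemma Polynomial.infinite_coe_span_X_pow (R : Type*) [CommRing R] [IsDomain R] (s : ℕ) :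
    (Ideal.span {(X : R[X]) ^ s} : Set R[X]).Infinite :=
  Set.infinite_of_injective_forall_mem (mul_right_injective₀ (pow_ne_zero s X_ne_zero))
    fun f ↦ Ideal.mem_span_singleton.mpr (dvd_mul_right _ f)

lemma Polynomial.sub_sum_coeff_smul_X_pow_mem_span (R : Type*) [CommRing R] (x : R[X]) (s : ℕ) :
    x - ∑ i ∈ Finset.range s, x.coeff i • X ^ i ∈ Ideal.span {(X : R[X]) ^ s} := by
  rw [Ideal.mem_span_singleton, X_pow_dvd_iff]
  intro d hd
  simp [coeff_X_pow, hd]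

def extremalBasis (p s : ℕ) : Set (ZMod p)[X] :=
  (Ideal.span {(X : (ZMod p)[X]) ^ s} : Set (ZMod p)[X]) ∪ lowMonomials (ZMod p) s

lemma span_X_pow_subset_extremalBasis :
    (Ideal.span {(X : (ZMod p)[X]) ^ s} : Set (ZMod p)[X]) ⊆ extremalBasis p s :=
  Set.subset_union_left

lemma lowMonomials_subset_extremalBasis : lowMonomials (ZMod p) s ⊆ extremalBasis p s :=
  Set.subset_union_right

variable [Fact p.Prime]

lemma X_pow_notMem_span_X_pow {i : ℕ} (hi : i < s) :
    (X : (ZMod p)[X]) ^ i ∉ Ideal.span {X ^ s} := by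
  rw [Ideal.mem_span_singleton, X_pow_dvd_iff]
  exact fun h ↦ by simpa using h i hi

lemma mem_itSum_of_lowMonomials_subset {B : Set (ZMod p)[X]} {k₀ K : ℕ}
    (hB : lowMonomials (ZMod p) s ⊆ B)
    (hspan : ∀ m, k₀ ≤ m → (Ideal.span {(X : (ZMod p)[X]) ^ s} : Set (ZMod p)[X]) ⊆ itSum B m)
    (hK : s * (p - 1) + k₀ ≤ K) (x : (ZMod p)[X]) : x ∈ itSum B K := by
  set S := ∑ i ∈ Finset.range s, (x.coeff i).val
  have hlow : ∑ i ∈ Finset.range s, x.coeff i • X ^ i ∈ itSum B S :=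
    sum_mem_itSum _ fun i hi ↦ by
      simpa using zmod_smul_mem_itSum (x.coeff i)
        (mem_itSum_one.mpr (hB ⟨i, Finset.mem_range.mp hi, rfl⟩))
  have hS : S ≤ s * (p - 1) := by
    have := (Fact.out : p.Prime).pos
    calc S ≤ ∑ _i ∈ Finset.range s, (p - 1) :=
          Finset.sum_le_sum fun i _ ↦ Nat.le_sub_one_of_lt (x.coeff i).val_lt
      _ = s * (p - 1) := by simp
  have hhigh := hspan (K - S) (by omega) (sub_sum_coeff_smul_X_pow_mem_span (ZMod p) x s)
  simpa [show S + (K - S) = K by omega] using add_mem_itSum hlow hhigh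

lemma itSum_extremalBasis {h : ℕ} (hs : s * (p - 1) < h) :
    itSum (extremalBasis p s) h = Set.univ := by
  refine Set.eq_univ_of_forall (mem_itSum_of_lowMonomials_subset (k₀ := 1)
    lowMonomials_subset_extremalBasis (fun m hm ↦ ?_) hs)
  exact ((Ideal.span {(X : (ZMod p)[X]) ^ s}).toAddSubgroup.coe_subset_itSum hm).trans
    (itSum_mono span_X_pow_subset_extremalBasis m)

lemma itSum_extremalBasis_diff_singleton {w : (ZMod p)[X]} (hw : w ∈ Ideal.span {X ^ s}) :
    itSum (extremalBasis p s \ {w}) (s * (p - 1) + 2) = Set.univ := by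
  refine Set.eq_univ_of_forall
    (mem_itSum_of_lowMonomials_subset (k₀ := 2) ?_ (fun m hm ↦ ?_) le_rfl)
  · rintro _ ⟨i, hi, rfl⟩
    exact ⟨lowMonomials_subset_extremalBasis ⟨i, hi, rfl⟩,
      fun hiw ↦ X_pow_notMem_span_X_pow hi (hiw ▸ hw)⟩
  · exact ((Ideal.span {(X : (ZMod p)[X]) ^ s}).toAddSubgroup.coe_subset_itSum_diff_singleton
      (infinite_coe_span_X_pow (ZMod p) s) w hm).trans
      (itSum_mono (Set.sdiff_subset_sdiff_left span_X_pow_subset_extremalBasis) m)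

lemma X_pow_mem_exceptionalSet_extremalBasis {i : ℕ} (hi : i < s) :
    (X : (ZMod p)[X]) ^ i ∈ exceptionalSet (extremalBasis p s) := by
  refine ⟨lowMonomials_subset_extremalBasis ⟨i, hi, rfl⟩, fun ⟨k, _, hk⟩ ↦ ?_⟩
  let H := (LinearMap.ker (lcoeff (ZMod p) i)).toAddSubgroup
  have hcompl : (H : Set (ZMod p)[X])ᶜ.Infinite := by
    refine Set.infinite_of_injective_forall_mem (f := fun f ↦ X ^ i + X ^ (i + 1) * f)
      (fun f g hfg ↦ mul_right_injective₀ (pow_ne_zero _ X_ne_zero) (add_left_cancel hfg))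
      fun f ↦ ?_
    simp [H, coeff_X_pow_mul']
  refine not_simEq_itSum_univ_of_subset_addSubgroup hcompl ?_ hk
  rintro f ⟨hf | ⟨j, hj, rfl⟩, hfi⟩
  · exact (Ideal.mem_span_singleton.mp hf |> X_pow_dvd_iff.mp) i hi
  · have hji : j ≠ i := fun h ↦ hfi (h ▸ rfl)
    simp [H, coeff_X_pow, hji.symm]

lemma exceptionalSet_extremalBasis :
    exceptionalSet (extremalBasis p s) = lowMonomials (ZMod p) s := by
  refine Set.Subset.antisymm (fun a ⟨ha, hexc⟩ ↦ ?_) ?_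
  · refine ha.resolve_left fun haI ↦ hexc ⟨s * (p - 1) + 2, by omega, ?_⟩
    rw [itSum_extremalBasis_diff_singleton haI, simEq_univ_iff, Set.compl_univ]
    exact Set.finite_empty
  · rintro _ ⟨i, hi, rfl⟩
    exact X_pow_mem_exceptionalSet_extremalBasis hi

end Construction

theorem stmt_10 (p : ℕ) [Fact p.Prime] (h : ℕ) (hh : 2 ≤ h) :
    IsGreatest {n : ℕ | ∃ A : Set (Polynomial (ZMod p)),
        SimEq (itSum A h) Set.univ ∧
        n = {a ∈ A | ¬ ∃ k, 1 ≤ k ∧ SimEq (itSum (A \ {a}) k) Set.univ}.ncard}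
      ((h - 1) / (p - 1)) := by
  set s := (h - 1) / (p - 1)
  have hs : s * (p - 1) < h := by
    have : s * (p - 1) ≤ h - 1 := Nat.div_mul_le_self _ _
    omega
  refine ⟨⟨extremalBasis p s, ?_, ?_⟩, ?_⟩
  · rw [itSum_extremalBasis hs]
    simp [SimEq]
  · change s = (exceptionalSet (extremalBasis p s)).ncard
    rw [exceptionalSet_extremalBasis, ncard_lowMonomials]
  · rintro n ⟨A, hA, rfl⟩
    exact ncard_exceptionalSet_le hA
end

section
/- Let G be an infinite abelian group such that G/m·G is finite for every 1 ≤ m ≤ h. If A ⊆ G satisfies ⋃_{i=1}^h iA ∼ G and ⟨A − A⟩ = G, then A is a basis of order at most h² + h·max_{1 ≤ m ≤ h} Ω(|G/m·G|) + h − 1. -/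
open Pointwise

/-- The subgroup `m·G = {m • g : g ∈ G}`. -/
def mulSubgroup (G : Type*) [AddCommGroup G] (m : ℕ) : AddSubgroup G :=
  (m • AddMonoidHom.id G).range

/-!
Call `g` a gap if some element has representations of lengths `p` and `p + g` with
`1 ≤ p` and `p + g ≤ h + 1`. Almost every element is a sum of at most `h` elements of `A`, so
comparing the representations of a generic `x` with those of `x + w` shows that any two
representations of one element have lengths congruent modulo the gcd `e` of the gaps. Since
`A - A` generates `G`, some element has representations of lengths `n` and `n + 1`, so `e = 1`.

For each gap `g` fix a witness `y_g ∈ p_g • A ∩ (p_g + g) • A`. Summing the witnesses over a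
multiset `L` of gaps gives `u ∈ (Σ p_g + s) • A` for every subsum `s` of `L`. A multiset whose
subsums fill a window `[k - h, k - 1]` exists because the gaps are coprime, and then every generic
`x = u + (x - u)` lies in `k • A`; counting gives `k ≤ h ^ 2 + h - 1`.
-/

open Filter

theorem itSum_eq_nsmul {G : Type*} [AddCommGroup G] (A : Set G) (n : ℕ) : itSum A n = n • A := by
  induction n with
  | zero => rfl
  | succ n ih => rw [itSum, ih, succ_nsmul]

theorem simEq_univ_iff_s13 {G : Type*} [AddCommGroup G] (S : Set G) :
    SimEq S Set.univ ↔ ∀ᶠ x in cofinite, x ∈ S := by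
  rw [SimEq, ← Set.top_eq_univ, symmDiff_top, eventually_cofinite]
  rfl

namespace Set

variable {G : Type*} [AddCommGroup G] {A : Set G}

theorem add_mem_nsmul {x y : G} {m n : ℕ} (hx : x ∈ m • A) (hy : y ∈ n • A) :
    x + y ∈ (m + n) • A := by
  rw [add_nsmul]
  exact add_mem_add hx hy

theorem multiset_sum_mem_nsmul {ι : Type*} {M : Multiset ι} {y : ι → G} {p : ι → ℕ}
    (hy : ∀ i ∈ M, y i ∈ p i • A) : (M.map y).sum ∈ (M.map p).sum • A := by
  induction M using Multiset.induction with
  | empty => simp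
  | cons i M ih =>
    simp only [Multiset.map_cons, Multiset.sum_cons]
    exact add_mem_nsmul (hy i (M.mem_cons_self i))
      (ih fun j hj => hy j (Multiset.mem_cons_of_mem hj))

theorem multiset_sum_mem_nsmul_add_sum {ι : Type*} {M N : Multiset ι} {y : ι → G} {p q : ι → ℕ}
    (hlow : ∀ i ∈ M, y i ∈ p i • A) (hhigh : ∀ i ∈ M, y i ∈ (p i + q i) • A) (hNM : N ≤ M) :
    (M.map y).sum ∈ ((M.map p).sum + (N.map q).sum) • A := by
  obtain ⟨K, rfl⟩ := Multiset.le_iff_exists_add.mp hNM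
  have hN := multiset_sum_mem_nsmul fun i hi => hhigh i (Multiset.mem_add.mpr (Or.inl hi))
  have hK := multiset_sum_mem_nsmul fun i hi => hlow i (Multiset.mem_add.mpr (Or.inr hi))
  have hlen : ((N + K).map p).sum + (N.map q).sum =
      (N.map fun i => p i + q i).sum + (K.map p).sum := by
    simp only [Multiset.map_add, Multiset.sum_add, Multiset.sum_map_add]
    ring
  rw [hlen, Multiset.map_add, Multiset.sum_add]
  exact add_mem_nsmul hN hK

end Set

section Gaps

variable {G : Type*} [AddCommGroup G] {A : Set G} {h : ℕ}

def IsGap (A : Set G) (h g : ℕ) : Prop :=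
  ∃ p y, 1 ≤ p ∧ p + g ≤ h + 1 ∧ y ∈ p • A ∧ y ∈ (p + g) • A

open Classical in
noncomputable def gaps (A : Set G) (h : ℕ) : Finset ℕ :=
  {g ∈ Finset.Icc 1 h | IsGap A h g}

noncomputable def gapGcd (A : Set G) (h : ℕ) : ℕ :=
  (gaps A h).gcd id

theorem mem_gaps {g : ℕ} : g ∈ gaps A h ↔ g ∈ Finset.Icc 1 h ∧ IsGap A h g := by
  classical
  rw [gaps, Finset.mem_filter]

theorem modEq_gapGcd_of_mem_nsmul {y : G} {p q : ℕ} (hp : 1 ≤ p) (hph : p ≤ h + 1)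
    (hq : 1 ≤ q) (hqh : q ≤ h + 1) (hyp : y ∈ p • A) (hyq : y ∈ q • A) :
    p ≡ q [MOD gapGcd A h] := by
  wlog hpq : p ≤ q generalizing p q
  · exact (this hq hqh hp hph hyq hyp (by omega)).symm
  rw [Nat.modEq_iff_dvd' hpq]
  rcases Nat.eq_zero_or_pos (q - p) with hzero | hpos
  · rw [hzero]
    exact dvd_zero _
  · have hgap : q - p ∈ gaps A h :=
      mem_gaps.mpr ⟨Finset.mem_Icc.mpr ⟨hpos, by omega⟩,
        p, y, hp, by omega, hyp, by rwa [Nat.add_sub_cancel' hpq]⟩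
    exact Finset.gcd_dvd hgap

/-- Induction on `n`: for a generic `x`, the representations of `x` and `x + w` are compared
through those of `x + w'`, where `w = w' + a` with `a ∈ A`. -/
theorem eventually_modEq_gapGcd_of_mem_nsmul
    (hcov : ∀ᶠ x in cofinite, ∃ i ∈ Finset.Icc 1 h, x ∈ i • A) {w : G} {n : ℕ} (hw : w ∈ n • A) :
    ∀ᶠ x in cofinite, ∀ i ∈ Finset.Icc 1 h, ∀ k ∈ Finset.Icc 1 h,
      x ∈ i • A → x + w ∈ k • A → i + n ≡ k [MOD gapGcd A h] := by
  induction n generalizing w with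
  | zero =>
    obtain rfl : w = 0 := hw
    refine Eventually.of_forall fun x i hi k hk hxi hxk => ?_
    rw [Finset.mem_Icc] at hi hk
    exact modEq_gapGcd_of_mem_nsmul hi.1 (by omega) hk.1 (by omega) hxi (by simpa using hxk)
  | succ n ih =>
    obtain ⟨w', hw', a, ha, rfl⟩ := Set.mem_add.mp ((succ_nsmul A n) ▸ hw)
    filter_upwards [ih hw', (add_left_injective w').tendsto_cofinite.eventually hcov]
      with x hx ⟨j, hj, hxj⟩ i hi k hk hxi hxk
    rw [Finset.mem_Icc] at hj hk
    have hxj' : x + w' + a ∈ (j + 1) • A := Set.add_mem_nsmul hxj (by rwa [one_nsmul])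
    have hjk := modEq_gapGcd_of_mem_nsmul (h := h) (p := j + 1) (q := k)
      (by omega) (by omega) hk.1 (by omega) hxj' (by rwa [add_assoc])
    exact ((hx i hi j (Finset.mem_Icc.mpr hj) hxi hxj).add_right 1).trans hjk

theorem modEq_gapGcd_of_mem_nsmul_of_cover [Infinite G]
    (hcov : ∀ᶠ x in cofinite, ∃ i ∈ Finset.Icc 1 h, x ∈ i • A) {y : G} {m n : ℕ}
    (hm : y ∈ m • A) (hn : y ∈ n • A) : m ≡ n [MOD gapGcd A h] := by
  obtain ⟨x, hxm, hxn, ⟨i, hi, hxi⟩, ⟨k, hk, hxk⟩⟩ :=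
    ((eventually_modEq_gapGcd_of_mem_nsmul hcov hm).and
      ((eventually_modEq_gapGcd_of_mem_nsmul hcov hn).and
        (hcov.and ((add_left_injective y).tendsto_cofinite.eventually hcov)))).exists
  exact Nat.ModEq.add_left_cancel' i ((hxm i hi k hk hxi hxk).trans (hxn i hi k hk hxi hxk).symm)

theorem exists_nsmul_sub_nsmul_eq (hgen : AddSubgroup.closure (A - A) = ⊤) (g : G) :
    ∃ n : ℕ, ∃ u ∈ n • A, ∃ v ∈ n • A, u - v = g := by
  let H : AddSubgroup G :=
    { carrier := {g | ∃ n : ℕ, ∃ u ∈ n • A, ∃ v ∈ n • A, u - v = g}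
      zero_mem' := ⟨0, 0, rfl, 0, rfl, sub_self 0⟩
      add_mem' := by
        rintro _ _ ⟨m, u, hu, v, hv, rfl⟩ ⟨n, u', hu', v', hv', rfl⟩
        exact ⟨m + n, u + u', Set.add_mem_nsmul hu hu', v + v', Set.add_mem_nsmul hv hv', by abel⟩
      neg_mem' := by
        rintro _ ⟨n, u, hu, v, hv, rfl⟩
        exact ⟨n, v, hv, u, hu, by abel⟩ }
  have hAA : A - A ⊆ H := by
    rintro _ ⟨a, ha, b, hb, rfl⟩
    exact ⟨1, a, by rwa [one_nsmul], b, by rwa [one_nsmul], rfl⟩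
  exact (AddSubgroup.closure_le H).mpr hAA (hgen ▸ AddSubgroup.mem_top g)

/-- Writing `a ∈ A` as `u - v` with `u, v ∈ n • A` puts `u = v + a` in both `n • A` and
`(n + 1) • A`. -/
theorem gapGcd_eq_one [Infinite G] (hcov : ∀ᶠ x in cofinite, ∃ i ∈ Finset.Icc 1 h, x ∈ i • A)
    (hgen : AddSubgroup.closure (A - A) = ⊤) : gapGcd A h = 1 := by
  obtain ⟨a, ha⟩ : A.Nonempty := by
    by_contra hA
    simp [Set.not_nonempty_iff_eq_empty.mp hA] at hgen
  obtain ⟨n, u, hu, v, hv, huv⟩ := exists_nsmul_sub_nsmul_eq hgen a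
  have hu' : u ∈ (n + 1) • A := by
    rw [eq_add_of_sub_eq' huv]
    exact Set.add_mem_nsmul hv (by rwa [one_nsmul])
  have hmod := modEq_gapGcd_of_mem_nsmul_of_cover hcov hu hu'
  rwa [Nat.modEq_iff_dvd' (n.le_add_right 1), Nat.add_sub_cancel_left, Nat.dvd_one] at hmod

end Gaps

section Digits

theorem exists_lt_modEq_mul_of_gcd_dvd {d g b : ℕ} (hd : 0 < d) (hb : d = Nat.gcd d g * b)
    {x : ℤ} (hx : (Nat.gcd d g : ℤ) ∣ x) : ∃ c < b, x ≡ c * g [ZMOD d] := by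
  obtain ⟨x', rfl⟩ := hx
  obtain ⟨g', hg'⟩ := Nat.gcd_dvd_right d g
  have hb0 : (0 : ℤ) < b := by
    rcases Nat.eq_zero_or_pos b with h0 | h0
    · rw [h0, mul_zero] at hb; omega
    · exact_mod_cast h0
  set c := x' * Nat.gcdB d g % b
  have hc0 : 0 ≤ c := Int.emod_nonneg _ hb0.ne'
  have hcb : c < b := Int.emod_lt_of_pos _ hb0
  refine ⟨c.toNat, by omega, ?_⟩
  rw [Int.toNat_of_nonneg hc0]
  have hbezout : (Nat.gcd d g : ℤ) * x' ≡ x' * Nat.gcdB d g * g [ZMOD d] := by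
    rw [Nat.gcd_eq_gcd_ab, Int.modEq_iff_dvd]
    exact ⟨-(Nat.gcdA d g * x'), by ring⟩
  have hreduce : c * g ≡ x' * Nat.gcdB d g * g [ZMOD b * g] := (Int.mod_modEq _ _).mul_right'
  have hdvd : (d : ℤ) ∣ b * g := by
    refine ⟨g', ?_⟩
    have hb' : (d : ℤ) = Nat.gcd d g * b := by exact_mod_cast hb
    have hg'' : (g : ℤ) = Nat.gcd d g * g' := by exact_mod_cast hg'
    linear_combination (b : ℤ) * hg'' - (g' : ℤ) * hb'
  exact hbezout.trans (hreduce.of_dvd hdvd).symm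

def CoversMultiplesMod (Γ : Finset ℕ) (n d : ℕ) (M : Multiset ℕ) : Prop :=
  (∀ g ∈ M, g ∈ Γ) ∧ ∀ x : ℤ, (d : ℤ) ∣ x → ∃ N ≤ M, x ≡ N.sum [ZMOD n]

theorem CoversMultiplesMod.add_replicate {Γ : Finset ℕ} {n d g b : ℕ} {M : Multiset ℕ}
    (hM : CoversMultiplesMod Γ n d M) (hg : g ∈ Γ) (hd : 0 < d) (hb : d = Nat.gcd d g * b) :
    CoversMultiplesMod Γ n (Nat.gcd d g) (M + Multiset.replicate (b - 1) g) := by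
  refine ⟨fun g' hg' => ?_, fun x hx => ?_⟩
  · rcases Multiset.mem_add.mp hg' with hg' | hg'
    · exact hM.1 g' hg'
    · rwa [Multiset.eq_of_mem_replicate hg']
  · obtain ⟨c, hcb, hc⟩ := exists_lt_modEq_mul_of_gcd_dvd hd hb hx
    obtain ⟨N, hNM, hN⟩ := hM.2 (x - c * g) hc.symm.dvd
    refine ⟨N + Multiset.replicate c g,
      add_le_add hNM (Multiset.replicate_le_replicate g |>.mpr (by omega)), ?_⟩
    rw [Multiset.sum_add, Multiset.sum_replicate, smul_eq_mul]
    push_cast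
    simpa using hN.add_right (c * g)

/-- Descent along `d`: while `d ≠ 1`, some `g ∈ Γ` is not a multiple of `d`, and adding
`d / gcd d g - 1` copies of `g` passes from `d` to `gcd d g`. -/
theorem exists_coversMultiplesMod_one {Γ : Finset ℕ} (hΓ : Γ.gcd id = 1) {n d : ℕ} (hd : 0 < d)
    {M : Multiset ℕ} (hM : CoversMultiplesMod Γ n d M) (hcard : (M.card + 1) * d ≤ n) :
    ∃ M', CoversMultiplesMod Γ n 1 M' ∧ M'.card < n := by
  induction d using Nat.strong_induction_on generalizing M with
  | _ d ih =>
    by_cases hd1 : d = 1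
    · subst hd1
      exact ⟨M, hM, by omega⟩
    obtain ⟨g, hgΓ, hdg⟩ : ∃ g ∈ Γ, ¬ d ∣ g := by
      by_contra! hall
      exact hd1 (Nat.dvd_one.mp (hΓ ▸ Finset.dvd_gcd hall))
    obtain ⟨b, hb⟩ := Nat.gcd_dvd_left d g
    have hgcd_pos : 0 < Nat.gcd d g := Nat.gcd_pos_of_pos_left g hd
    have hb2 : 2 ≤ b := by
      rcases Nat.lt_or_ge b 2 with hb' | hb'
      · interval_cases b
        · omega
        · exact absurd (by rw [hb, mul_one]; exact Nat.gcd_dvd_right d g) hdg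
      · exact hb'
    refine ih (Nat.gcd d g) (by nlinarith) hgcd_pos (hM.add_replicate hgΓ hd hb) ?_
    rw [Multiset.card_add, Multiset.card_replicate, show M.card + (b - 1) + 1 = M.card + b by omega]
    calc (M.card + b) * Nat.gcd d g ≤ (M.card + 1) * b * Nat.gcd d g :=
          Nat.mul_le_mul_right _ (by nlinarith)
      _ = (M.card + 1) * (Nat.gcd d g * b) := by ring
      _ = (M.card + 1) * d := by rw [← hb]
      _ ≤ n := hcard

theorem exists_multiset_sum_modEq {Γ : Finset ℕ} (hΓ : Γ.gcd id = 1) {n : ℕ} (hn : 0 < n) :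
    ∃ M : Multiset ℕ, (∀ g ∈ M, g ∈ Γ) ∧ M.card < n ∧ ∀ x : ℕ, ∃ N ≤ M, N.sum ≡ x [MOD n] := by
  have hbase : CoversMultiplesMod Γ n n 0 :=
    ⟨by simp, fun x hx => ⟨0, le_rfl, by simpa [Int.modEq_zero_iff_dvd] using hx⟩⟩
  obtain ⟨M, hM, hcard⟩ := exists_coversMultiplesMod_one hΓ hn hbase (by simp)
  refine ⟨M, hM.1, hcard, fun x => ?_⟩
  obtain ⟨N, hNM, hN⟩ := hM.2 x (one_dvd _)
  exact ⟨N, hNM, Int.natCast_modEq_iff.mp hN.symm⟩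

end Digits

section Window

theorem multiset_sum_le_sum_of_le {M N : Multiset ℕ} (h : N ≤ M) : N.sum ≤ M.sum := by
  obtain ⟨K, rfl⟩ := Multiset.le_iff_exists_add.mp h
  simp

variable {M : Multiset ℕ} {n : ℕ}

theorem le_sum_add_one_of_forall_modEq (hn : 0 < n) (hM : ∀ x : ℕ, ∃ N ≤ M, N.sum ≡ x [MOD n]) :
    n ≤ M.sum + 1 := by
  obtain ⟨N, hNM, hN⟩ := hM (n - 1)
  have hmod : N.sum % n ≤ N.sum := Nat.mod_le _ _
  rw [hN, Nat.mod_eq_of_lt (by omega)] at hmod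
  have := multiset_sum_le_sum_of_le hNM
  omega

theorem exists_le_replicate_add_sum_eq {m t : ℕ} (hn : 0 < n)
    (hM : ∀ x : ℕ, ∃ N ≤ M, N.sum ≡ x [MOD n]) (hlow : M.sum < t + n) (hhigh : t ≤ m * n) :
    ∃ N ≤ Multiset.replicate m n + M, N.sum = t := by
  obtain ⟨N, hNM, hN⟩ := hM t
  have hNsum := multiset_sum_le_sum_of_le hNM
  have hNt : N.sum ≤ t := by
    by_contra! hlt
    have := Nat.le_of_dvd (by omega) ((Nat.modEq_iff_dvd' hlt.le).mp hN.symm)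
    omega
  obtain ⟨q, hq⟩ := (Nat.modEq_iff_dvd' hNt).mp hN
  have hqm : q ≤ m := Nat.le_of_mul_le_mul_left (by rw [← hq, mul_comm]; omega) hn
  refine ⟨Multiset.replicate q n + N,
    add_le_add (Multiset.replicate_le_replicate n |>.mpr hqm) hNM, ?_⟩
  rw [Multiset.sum_add, Multiset.sum_replicate, smul_eq_mul]
  lia

end Window

/-- `L` is `h - 1` copies of some `g₁ ∈ Γ` plus a multiset `M` whose subsums meet every class
mod `g₁`, and `k = (L.map p).sum + M.sum + 1 + h - g₁`. -/
theorem exists_multiset_window {Γ : Finset ℕ} {h : ℕ} (hΓ : Γ.gcd id = 1)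
    (hΓh : Γ ⊆ Finset.Icc 1 h) {p : ℕ → ℕ} (hp : ∀ g ∈ Γ, p g + g ≤ h + 1) :
    ∃ L : Multiset ℕ, ∃ k, (∀ g ∈ L, g ∈ Γ) ∧ 1 ≤ k ∧ h ≤ k ∧ k ≤ h ^ 2 + h - 1 ∧
      ∀ i ∈ Finset.Icc 1 h, ∃ N ≤ L, (L.map p).sum + N.sum = k - i := by
  obtain ⟨g₁, hg₁⟩ : Γ.Nonempty := by
    by_contra! hempty
    simp [hempty] at hΓ
  obtain ⟨hg₁1, hg₁h⟩ := Finset.mem_Icc.mp (hΓh hg₁)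
  obtain ⟨M, hMΓ, hMcard, hMcov⟩ := exists_multiset_sum_modEq hΓ (by omega : 0 < g₁)
  have hMsum_ge := le_sum_add_one_of_forall_modEq (by omega) hMcov
  have hMsum_le : M.sum ≤ h * M.card := by
    simpa [mul_comm] using Multiset.sum_le_card_nsmul M h fun g hg =>
      (Finset.mem_Icc.mp (hΓh (hMΓ g hg))).2
  have hMlen : (M.map p).sum + M.sum ≤ (h + 1) * M.card := by
    have := Multiset.sum_le_card_nsmul (M.map fun g => p g + g) (h + 1) (by
      simp only [Multiset.mem_map]
      rintro _ ⟨g, hg, rfl⟩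
      exact hp g (hMΓ g hg))
    simpa [Multiset.sum_map_add, mul_comm] using this
  have hLp : ((Multiset.replicate (h - 1) g₁ + M).map p).sum = (h - 1) * p g₁ + (M.map p).sum := by
    simp [Multiset.map_replicate, Multiset.sum_replicate]
  refine ⟨Multiset.replicate (h - 1) g₁ + M, (h - 1) * p g₁ + (M.map p).sum + M.sum + 1 + h - g₁,
    fun g hg => (Multiset.mem_add.mp hg).elim (fun hg => Multiset.eq_of_mem_replicate hg ▸ hg₁)
      (hMΓ g), by omega, by omega, ?_, fun i hi => ?_⟩
  · -- `k ≤ (h - 1) (h + 1 - g₁) + (h + 1) (g₁ - 1) + 1 + h - g₁ = h ^ 2 + g₁ - 1`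
    have hpg₁ : (h - 1) * p g₁ ≤ (h - 1) * (h + 1 - g₁) :=
      Nat.mul_le_mul_left _ (by have := hp g₁ hg₁; omega)
    have hcard : (h + 1) * M.card ≤ (h + 1) * (g₁ - 1) := Nat.mul_le_mul_left _ (by omega)
    zify [hg₁1, hg₁h, (by omega : g₁ ≤ h + 1), (by omega : 1 ≤ h), (by nlinarith : 1 ≤ h ^ 2 + h),
      (by omega : g₁ ≤ (h - 1) * p g₁ + (M.map p).sum + M.sum + 1 + h)] at hpg₁ hcard hMlen ⊢
    linarith
  · rw [Finset.mem_Icc] at hi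
    have hwindow : M.sum + 1 + h - g₁ - i ≤ (h - 1) * g₁ := by
      have : h * M.card + h ≤ h * g₁ := by nlinarith
      rw [Nat.sub_mul]
      omega
    obtain ⟨N, hNL, hN⟩ := exists_le_replicate_add_sum_eq (by omega) hMcov (by omega) hwindow
    exact ⟨N, hNL, by omega⟩

theorem eventually_mem_nsmul_of_forall_mem_nsmul_sub {G : Type*} [AddCommGroup G] {A : Set G}
    {h k : ℕ} (hcov : ∀ᶠ x in cofinite, ∃ i ∈ Finset.Icc 1 h, x ∈ i • A) {u : G}
    (hu : ∀ i ∈ Finset.Icc 1 h, u ∈ (k - i) • A) (hk : h ≤ k) : ∀ᶠ x in cofinite, x ∈ k • A := by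
  filter_upwards [(sub_left_injective (b := u)).tendsto_cofinite.eventually hcov]
    with x ⟨i, hi, hxi⟩
  have hik : i ≤ k := (Finset.mem_Icc.mp hi).2.trans hk
  simpa [Nat.sub_add_cancel hik] using Set.add_mem_nsmul (hu i hi) hxi

theorem exists_gap_witnesses {G : Type*} [AddCommGroup G] (A : Set G) (h : ℕ) :
    ∃ (p : ℕ → ℕ) (y : ℕ → G), ∀ g ∈ gaps A h,
      p g + g ≤ h + 1 ∧ y g ∈ p g • A ∧ y g ∈ (p g + g) • A := by
  have hwit : ∀ g, ∃ p y, g ∈ gaps A h → p + g ≤ h + 1 ∧ y ∈ p • A ∧ y ∈ (p + g) • A := by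
    intro g
    by_cases hg : g ∈ gaps A h
    · obtain ⟨p, y, -, hp⟩ := (mem_gaps.mp hg).2
      exact ⟨p, y, fun _ => hp⟩
    · exact ⟨0, 0, fun hg' => absurd hg' hg⟩
  choose p y hpy using hwit
  exact ⟨p, y, hpy⟩

theorem exists_eventually_mem_nsmul {G : Type*} [AddCommGroup G] [Infinite G] {A : Set G} {h : ℕ}
    (hcov : ∀ᶠ x in cofinite, ∃ i ∈ Finset.Icc 1 h, x ∈ i • A)
    (hgen : AddSubgroup.closure (A - A) = ⊤) :
    ∃ k, 1 ≤ k ∧ k ≤ h ^ 2 + h - 1 ∧ ∀ᶠ x in cofinite, x ∈ k • A := by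
  obtain ⟨p, y, hpy⟩ := exists_gap_witnesses A h
  obtain ⟨L, k, hLgaps, hk1, hhk, hkh, hwindow⟩ := exists_multiset_window (gapGcd_eq_one hcov hgen)
    (fun g hg => (mem_gaps.mp hg).1) fun g hg => (hpy g hg).1
  refine ⟨k, hk1, hkh, eventually_mem_nsmul_of_forall_mem_nsmul_sub hcov (u := (L.map y).sum)
    (fun i hi => ?_) hhk⟩
  obtain ⟨N, hNL, hN⟩ := hwindow i hi
  rw [← hN, ← Multiset.map_id N]
  exact Set.multiset_sum_mem_nsmul_add_sum (fun g hg => (hpy g (hLgaps g hg)).2.1)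
    (fun g hg => (hpy g (hLgaps g hg)).2.2) hNL

theorem stmt_13_general {G : Type*} [AddCommGroup G] [Infinite G] (h : ℕ)
    (A : Set G) (hA : SimEq (⋃ i ∈ Finset.Icc 1 h, itSum A i) Set.univ)
    (hgen : AddSubgroup.closure (A - A) = ⊤) :
    ∃ k, 1 ≤ k ∧
      k ≤ h ^ 2 + h * (Finset.Icc 1 h).sup
          (fun m => (Nat.card (G ⧸ mulSubgroup G m)).primeFactorsList.length)
        + h - 1 ∧
      SimEq (itSum A k) Set.univ := by
  have hcov : ∀ᶠ x in cofinite, ∃ i ∈ Finset.Icc 1 h, x ∈ i • A := by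
    simpa [simEq_univ_iff_s13, itSum_eq_nsmul] using hA
  obtain ⟨k, hk1, hkh, hk⟩ := exists_eventually_mem_nsmul hcov hgen
  exact ⟨k, hk1, hkh.trans (by omega), by rwa [simEq_univ_iff_s13, itSum_eq_nsmul]⟩

theorem stmt_13 {G : Type*} [AddCommGroup G] [Infinite G] (h : ℕ) (hh : 1 ≤ h)
    (hfin : ∀ m, 1 ≤ m → m ≤ h → Finite (G ⧸ mulSubgroup G m))
    (A : Set G) (hA : SimEq (⋃ i ∈ Finset.Icc 1 h, itSum A i) Set.univ)
    (hgen : AddSubgroup.closure (A - A) = ⊤) :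
    ∃ k, 1 ≤ k ∧
      k ≤ h ^ 2 + h * (Finset.Icc 1 h).sup
          (fun m => (Nat.card (G ⧸ mulSubgroup G m)).primeFactorsList.length)
        + h - 1 ∧
      SimEq (itSum A k) Set.univ :=
  stmt_13_general h A hA hgen
end
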